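/- Let N ≥ 3 and η_α = exp(2πiα/N) for α = 1,…,N. Then the triple sum over pairwise distinct indices ∑_{α≠β≠γ≠α} η_γ²/((η_α - η_γ)(η_β - η_γ)) = N(N-1)(N-2)/3. -/

import Mathlib

/-!
For distinct `a, b, c`, the three cyclic rotations of `c² / ((a - c)(b - c))` add up to `1`: this
is the leading coefficient of the Lagrange interpolant of `X²` at `a, b, c`. The sum over ordered
triples of distinct indices is invariant under cyclically rotating the triple, so three times the
sum is the number `N(N - 1)(N - 2)` of such triples. The only property of the roots of unity
`η_α` that matters is that they are pairwise distinct.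
-/

open Finset Complex

noncomputable def η (N α : ℕ) : ℂ := Complex.exp (2 * Real.pi * Complex.I * α / N)

section DistinctTriples

variable {α : Type*} [DecidableEq α]

theorem sum_erase_erase_eq_sum_ite {M : Type*} [AddCommMonoid M] (s : Finset α)
    (f : α → α → α → M) :
    ∑ x ∈ s, ∑ y ∈ s.erase x, ∑ z ∈ (s.erase x).erase y, f x y z =
      ∑ x ∈ s, ∑ y ∈ s, ∑ z ∈ s, if x ≠ y ∧ x ≠ z ∧ y ≠ z then f x y z else 0 := by
  refine sum_congr rfl fun x _ => ?_
  rw [← filter_ne' s x, sum_filter]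
  refine sum_congr rfl fun y _ => ?_
  by_cases hyx : y = x
  · simp [hyx]
  · rw [if_pos hyx, ← filter_ne', filter_filter, sum_filter]
    exact sum_congr rfl fun z _ => if_congr (by tauto) rfl rfl

theorem sum_erase_erase_rotate {M : Type*} [AddCommMonoid M] (s : Finset α)
    (f : α → α → α → M) :
    ∑ x ∈ s, ∑ y ∈ s.erase x, ∑ z ∈ (s.erase x).erase y, f x y z =
      ∑ x ∈ s, ∑ y ∈ s.erase x, ∑ z ∈ (s.erase x).erase y, f y z x := by
  rw [sum_erase_erase_eq_sum_ite, sum_erase_erase_eq_sum_ite]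
  conv_rhs => rw [sum_comm]; enter [2, y]; rw [sum_comm]
  exact sum_congr rfl fun x _ => sum_congr rfl fun y _ => sum_congr rfl fun z _ =>
    if_congr (by tauto) rfl rfl

theorem sum_erase_erase_one {R : Type*} [Ring R] (s : Finset α) :
    ∑ x ∈ s, ∑ y ∈ s.erase x, ∑ _z ∈ (s.erase x).erase y, (1 : R) =
      #s * (#s - 1) * (#s - 2) := by
  calc ∑ x ∈ s, ∑ y ∈ s.erase x, ∑ _z ∈ (s.erase x).erase y, (1 : R)
      = ∑ x ∈ s, ∑ _y ∈ s.erase x, ((#s : R) - 2) :=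
        sum_congr rfl fun x hx => sum_congr rfl fun y hy => by
          rw [sum_const, nsmul_one, cast_card_erase_of_mem hy, cast_card_erase_of_mem hx,
            sub_sub, one_add_one_eq_two]
    _ = #s * (#s - 1) * (#s - 2) := by
        simp only [sum_const, nsmul_eq_mul]
        rw [sum_congr rfl fun x hx => by rw [cast_card_erase_of_mem hx], sum_const, nsmul_eq_mul,
          mul_assoc]

end DistinctTriples

theorem cyclic_sum_sq_div_mul_sub_eq_one {K : Type*} [Field K] {a b c : K}
    (hab : a ≠ b) (hbc : b ≠ c) (hca : c ≠ a) :
    c ^ 2 / ((a - c) * (b - c)) + a ^ 2 / ((b - a) * (c - a)) + b ^ 2 / ((c - b) * (a - b)) = 1 := by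
  have := sub_ne_zero.2 hab
  have := sub_ne_zero.2 hbc
  have := sub_ne_zero.2 hca
  have := sub_ne_zero.2 hab.symm
  have := sub_ne_zero.2 hbc.symm
  have := sub_ne_zero.2 hca.symm
  field_simp
  ring

theorem three_mul_sum_distinct_triples {α K : Type*} [DecidableEq α] [Field K] (s : Finset α)
    (v : α → K) (hv : Set.InjOn v s) :
    3 * ∑ x ∈ s, ∑ y ∈ s.erase x, ∑ z ∈ (s.erase x).erase y,
        v z ^ 2 / ((v x - v z) * (v y - v z)) =
      #s * (#s - 1) * (#s - 2) := by
  set F : α → α → α → K := fun x y z => v z ^ 2 / ((v x - v z) * (v y - v z))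
  have hrot := sum_erase_erase_rotate s F
  have hrot' := sum_erase_erase_rotate s fun x y z => F y z x
  calc 3 * ∑ x ∈ s, ∑ y ∈ s.erase x, ∑ z ∈ (s.erase x).erase y, F x y z
      = ∑ x ∈ s, ∑ y ∈ s.erase x, ∑ z ∈ (s.erase x).erase y,
          (F x y z + F y z x + F z x y) := by
        simp only [sum_add_distrib]
        rw [← hrot', ← hrot]
        ring
    _ = ∑ x ∈ s, ∑ y ∈ s.erase x, ∑ _z ∈ (s.erase x).erase y, (1 : K) := by
        refine sum_congr rfl fun x hx => sum_congr rfl fun y hy => sum_congr rfl fun z hz => ?_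
        simp only [mem_erase] at hy hz
        exact cyclic_sum_sq_div_mul_sub_eq_one (hv.ne hx hy.2 hy.1.symm)
          (hv.ne hy.2 hz.2.2 hz.1.symm) (hv.ne hz.2.2 hx hz.2.1)
    _ = #s * (#s - 1) * (#s - 2) := sum_erase_erase_one s

theorem η_eq_pow (N α : ℕ) : η N α = Complex.exp (2 * Real.pi * Complex.I / N) ^ α := by
  rw [η, ← Complex.exp_nat_mul]
  ring_nf

theorem injOn_η (N : ℕ) : Set.InjOn (η N) (Icc 1 N : Finset ℕ) := by
  intro a ha b hb hab
  simp only [coe_Icc, Set.mem_Icc] at ha hb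
  have hζ := Complex.isPrimitiveRoot_exp N (by omega)
  obtain ⟨a, rfl⟩ : ∃ a', a = a' + 1 := ⟨a - 1, by omega⟩
  obtain ⟨b, rfl⟩ : ∃ b', b = b' + 1 := ⟨b - 1, by omega⟩
  rw [η_eq_pow, η_eq_pow, pow_succ, pow_succ] at hab
  have := hζ.pow_inj (by omega) (by omega) (mul_right_cancel₀ (hζ.ne_zero (by omega)) hab)
  omega

theorem stmt_13_general (N : ℕ) :
    ∑ α ∈ Finset.Icc 1 N, ∑ β ∈ (Finset.Icc 1 N).erase α,
        ∑ γ ∈ ((Finset.Icc 1 N).erase α).erase β,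
          (η N γ) ^ 2 / ((η N α - η N γ) * (η N β - η N γ)) =
      (N : ℂ) * ((N : ℂ) - 1) * ((N : ℂ) - 2) / 3 := by
  have h := three_mul_sum_distinct_triples (Icc 1 N) (η N) (injOn_η N)
  rw [Nat.card_Icc, Nat.add_sub_cancel] at h
  rw [eq_div_iff three_ne_zero, mul_comm, h]

theorem stmt_13 (N : ℕ) (hN : 3 ≤ N) :
    ∑ α ∈ Finset.Icc 1 N, ∑ β ∈ (Finset.Icc 1 N).erase α,
        ∑ γ ∈ ((Finset.Icc 1 N).erase α).erase β,
          (η N γ) ^ 2 / ((η N α - η N γ) * (η N β - η N γ)) =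
      (N : ℂ) * ((N : ℂ) - 1) * ((N : ℂ) - 2) / 3 :=
  stmt_13_general N
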